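/- Let L, f, W : ℝ × ℝ × ℝ → ℝ, (t,q,v) ↦ L(t,q,v), f(t,q,v), W(t,q,v), be smooth, and suppose that for every twice continuously differentiable curve q : ℝ → ℝ and every t, EL(L)[q](t) = W(t, q(t), q'(t))·(q''(t) − f(t, q(t), q'(t))). Then W = ∂²L/∂v² and W satisfies the conservation equation ∂W/∂t + v·∂W/∂q + f·∂W/∂v + W·∂f/∂v = 0 at every point (t,q,v) ∈ ℝ³. -/

import Mathlib

/-- Partial derivative of `L (t,q,v)` with respect to `t`. -/
noncomputable def pt (L : ℝ → ℝ → ℝ → ℝ) : ℝ → ℝ → ℝ → ℝ :=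
  fun t q v => deriv (fun s => L s q v) t

/-- Partial derivative of `L (t,q,v)` with respect to `q`. -/
noncomputable def pq (L : ℝ → ℝ → ℝ → ℝ) : ℝ → ℝ → ℝ → ℝ :=
  fun t q v => deriv (fun s => L t s v) q

/-- Partial derivative of `L (t,q,v)` with respect to `v`. -/
noncomputable def pv (L : ℝ → ℝ → ℝ → ℝ) : ℝ → ℝ → ℝ → ℝ :=
  fun t q v => deriv (fun s => L t q s) v

/-- The Euler–Lagrange expression of the Lagrangian `L` along a curve `q`:
`EL(L)[q](t) = d/dt[∂L/∂v(t, q(t), q'(t))] − ∂L/∂q(t, q(t), q'(t))`. -/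
noncomputable def EL (L : ℝ → ℝ → ℝ → ℝ) (q : ℝ → ℝ) (t : ℝ) : ℝ :=
  deriv (fun s => pv L s (q s) (deriv q s)) t - pq L t (q t) (deriv q t)

section Aux

variable {M : Type*} [NormedAddCommGroup M] [NormedSpace ℝ M]
  {F : ℝ × ℝ × ℝ → M} {t q v : ℝ}

private lemma lineT (h : DifferentiableAt ℝ F (t, q, v)) :
    HasDerivAt (fun s => F (s, q, v)) (fderiv ℝ F (t, q, v) (1, 0, 0)) t :=
  h.hasFDerivAt.comp_hasDerivAt t
    ((hasDerivAt_id t).prodMk ((hasDerivAt_const t q).prodMk (hasDerivAt_const t v)))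

private lemma lineQ (h : DifferentiableAt ℝ F (t, q, v)) :
    HasDerivAt (fun s => F (t, s, v)) (fderiv ℝ F (t, q, v) (0, 1, 0)) q :=
  h.hasFDerivAt.comp_hasDerivAt q
    ((hasDerivAt_const q t).prodMk ((hasDerivAt_id q).prodMk (hasDerivAt_const q v)))

private lemma lineV (h : DifferentiableAt ℝ F (t, q, v)) :
    HasDerivAt (fun s => F (t, q, s)) (fderiv ℝ F (t, q, v) (0, 0, 1)) v :=
  h.hasFDerivAt.comp_hasDerivAt v
    ((hasDerivAt_const v t).prodMk ((hasDerivAt_const v q).prodMk (hasDerivAt_id v)))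

variable {G : ℝ × ℝ × ℝ → (ℝ × ℝ × ℝ) →L[ℝ] M}

private lemma lineT_ap (h : DifferentiableAt ℝ G (t, q, v)) (w : ℝ × ℝ × ℝ) :
    HasDerivAt (fun s => G (s, q, v) w) (fderiv ℝ G (t, q, v) (1, 0, 0) w) t := by
  simpa using (lineT h).clm_apply (hasDerivAt_const t w)

private lemma lineQ_ap (h : DifferentiableAt ℝ G (t, q, v)) (w : ℝ × ℝ × ℝ) :
    HasDerivAt (fun s => G (t, s, v) w) (fderiv ℝ G (t, q, v) (0, 1, 0) w) q := by
  simpa using (lineQ h).clm_apply (hasDerivAt_const q w)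

private lemma lineV_ap (h : DifferentiableAt ℝ G (t, q, v)) (w : ℝ × ℝ × ℝ) :
    HasDerivAt (fun s => G (t, q, s) w) (fderiv ℝ G (t, q, v) (0, 0, 1) w) v := by
  simpa using (lineV h).clm_apply (hasDerivAt_const v w)

variable {H : ℝ × ℝ × ℝ → (ℝ × ℝ × ℝ) →L[ℝ] ((ℝ × ℝ × ℝ) →L[ℝ] M)}

private lemma lineT_ap2 (h : DifferentiableAt ℝ H (t, q, v)) (w₁ w₂ : ℝ × ℝ × ℝ) :
    HasDerivAt (fun s => H (s, q, v) w₁ w₂) (fderiv ℝ H (t, q, v) (1, 0, 0) w₁ w₂) t := by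
  simpa using (lineT_ap h w₁).clm_apply (hasDerivAt_const t w₂)

private lemma lineQ_ap2 (h : DifferentiableAt ℝ H (t, q, v)) (w₁ w₂ : ℝ × ℝ × ℝ) :
    HasDerivAt (fun s => H (t, s, v) w₁ w₂) (fderiv ℝ H (t, q, v) (0, 1, 0) w₁ w₂) q := by
  simpa using (lineQ_ap h w₁).clm_apply (hasDerivAt_const q w₂)

private lemma lineV_ap2 (h : DifferentiableAt ℝ H (t, q, v)) (w₁ w₂ : ℝ × ℝ × ℝ) :
    HasDerivAt (fun s => H (t, q, s) w₁ w₂) (fderiv ℝ H (t, q, v) (0, 0, 1) w₁ w₂) v := by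
  simpa using (lineV_ap h w₁).clm_apply (hasDerivAt_const v w₂)

end Aux

/-- If `EL(L)[q] = W·(q'' − f)` along every `C²` curve, then `W = ∂²L/∂v²` and `W`
is a conserved presymplectic density for the flow of `q'' = f(t,q,q')`:
`∂W/∂t + v·∂W/∂q + f·∂W/∂v + W·∂f/∂v = 0`. -/
theorem variational_implies_conserved_presymplectic
    (L f W : ℝ → ℝ → ℝ → ℝ)
    (hL : ContDiff ℝ (⊤ : ℕ∞) (fun p : ℝ × ℝ × ℝ => L p.1 p.2.1 p.2.2))
    (hf : ContDiff ℝ (⊤ : ℕ∞) (fun p : ℝ × ℝ × ℝ => f p.1 p.2.1 p.2.2))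
    (hW : ContDiff ℝ (⊤ : ℕ∞) (fun p : ℝ × ℝ × ℝ => W p.1 p.2.1 p.2.2))
    (hEL : ∀ q : ℝ → ℝ, ContDiff ℝ 2 q → ∀ t : ℝ,
      EL L q t = W t (q t) (deriv q t) * (deriv (deriv q) t - f t (q t) (deriv q t))) :
    (∀ t q v : ℝ, W t q v = pv (pv L) t q v) ∧
    (∀ t q v : ℝ,
      pt W t q v + v * pq W t q v + f t q v * pv W t q v + W t q v * pv f t q v = 0) := by
  set F : ℝ × ℝ × ℝ → ℝ := fun p => L p.1 p.2.1 p.2.2 with hF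
  have hFd : Differentiable ℝ F := hL.differentiable (by simp)
  have hF'c : ContDiff ℝ (⊤ : ℕ∞) (fderiv ℝ F) := hL.fderiv_right (by simp)
  have hF'd : Differentiable ℝ (fderiv ℝ F) := hF'c.differentiable (by simp)
  have hF''c : ContDiff ℝ (⊤ : ℕ∞) (fderiv ℝ (fderiv ℝ F)) := hF'c.fderiv_right (by simp)
  have hF''d : Differentiable ℝ (fderiv ℝ (fderiv ℝ F)) := hF''c.differentiable (by simp)
  have hWd : Differentiable ℝ (fun p : ℝ × ℝ × ℝ => W p.1 p.2.1 p.2.2) :=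
    hW.differentiable (by simp)
  have hfd : Differentiable ℝ (fun p : ℝ × ℝ × ℝ => f p.1 p.2.1 p.2.2) :=
    hf.differentiable (by simp)
  -- pointwise formulas for first partials of L
  have h_pvL : ∀ t q v : ℝ, pv L t q v = fderiv ℝ F (t, q, v) (0, 0, 1) :=
    fun t q v => (lineV (hFd (t, q, v))).deriv
  have h_pqL : ∀ t q v : ℝ, pq L t q v = fderiv ℝ F (t, q, v) (0, 1, 0) :=
    fun t q v => (lineQ (hFd (t, q, v))).deriv
  -- the key identity from the EL hypothesis along quadratic curves
  have key : ∀ t₀ q₀ v₀ a : ℝ,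
      fderiv ℝ (fderiv ℝ F) (t₀, q₀, v₀) (1, v₀, a) (0, 0, 1)
        - fderiv ℝ F (t₀, q₀, v₀) (0, 1, 0)
        = W t₀ q₀ v₀ * (a - f t₀ q₀ v₀) := by
    intro t₀ q₀ v₀ a
    set qc : ℝ → ℝ := fun s => q₀ + v₀ * (s - t₀) + a / 2 * (s - t₀) ^ 2 with hqc
    have hqd : ∀ s, HasDerivAt qc (v₀ + a * (s - t₀)) s := by
      intro s
      have h1 : HasDerivAt (fun s : ℝ => s - t₀) 1 s := (hasDerivAt_id s).sub_const t₀
      have := ((hasDerivAt_const s q₀).add (h1.const_mul v₀)).add ((h1.pow 2).const_mul (a / 2))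
      exact this.congr_deriv (by ring)
    have hderiv_qc : deriv qc = fun s => v₀ + a * (s - t₀) := funext fun s => (hqd s).deriv
    have hqc2 : ContDiff ℝ 2 qc := by
      apply ContDiff.add
      · exact contDiff_const.add (contDiff_const.mul ((contDiff_id).sub contDiff_const))
      · exact contDiff_const.mul (((contDiff_id).sub contDiff_const).pow 2)
    have hq0 : qc t₀ = q₀ := by simp [hqc]
    have hv0 : deriv qc t₀ = v₀ := by rw [hderiv_qc]; simp
    have ha0 : deriv (deriv qc) t₀ = a := by
      rw [hderiv_qc]
      have : ∀ s, HasDerivAt (fun s : ℝ => v₀ + a * (s - t₀)) a s := by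
        intro s
        have h1 : HasDerivAt (fun s : ℝ => s - t₀) 1 s := (hasDerivAt_id s).sub_const t₀
        exact ((hasDerivAt_const s v₀).add (h1.const_mul a)).congr_deriv (by simp)
      exact (this t₀).deriv
    have hγ : HasDerivAt (fun s => ((s, qc s, deriv qc s) : ℝ × ℝ × ℝ)) (1, v₀, a) t₀ := by
      refine (hasDerivAt_id t₀).prodMk (HasDerivAt.prodMk ?_ ?_)
      · simpa using hqd t₀
      · rw [hderiv_qc]
        have h1 : HasDerivAt (fun s : ℝ => s - t₀) 1 t₀ := (hasDerivAt_id t₀).sub_const t₀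
        exact ((hasDerivAt_const t₀ v₀).add (h1.const_mul a)).congr_deriv (by simp)
    have hstep : HasDerivAt (fun s => fderiv ℝ F (s, qc s, deriv qc s) (0, 0, 1))
        (fderiv ℝ (fderiv ℝ F) (t₀, q₀, v₀) (1, v₀, a) (0, 0, 1)) t₀ := by
      have h1 : HasDerivAt (fun s => fderiv ℝ F (s, qc s, deriv qc s))
          (fderiv ℝ (fderiv ℝ F) (t₀, q₀, v₀) (1, v₀, a)) t₀ := by
        have := (hF'd (t₀, qc t₀, deriv qc t₀)).hasFDerivAt.comp_hasDerivAt t₀ hγ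
        rw [hq0, hv0] at this
        exact this
      simpa using h1.clm_apply (hasDerivAt_const t₀ ((0 : ℝ), (0 : ℝ), (1 : ℝ)))
    have hEL' := hEL qc hqc2 t₀
    rw [EL] at hEL'
    have hrw : (fun s => pv L s (qc s) (deriv qc s))
        = fun s => fderiv ℝ F (s, qc s, deriv qc s) (0, 0, 1) :=
      funext fun s => h_pvL s _ _
    rw [hrw, hstep.deriv, hq0, hv0, ha0, h_pqL] at hEL'
    exact hEL'
  -- split the vector (1, y, 0)/(1, y, a) linearly
  have hsplit : ∀ (T : (ℝ × ℝ × ℝ) →L[ℝ] ((ℝ × ℝ × ℝ) →L[ℝ] ℝ)) (y a : ℝ),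
      T (1, y, a) (0, 0, 1) = T (1, 0, 0) (0, 0, 1) + y * T (0, 1, 0) (0, 0, 1)
        + a * T (0, 0, 1) (0, 0, 1) := by
    intro T y a
    have hv : ((1, y, a) : ℝ × ℝ × ℝ)
        = (1, 0, 0) + y • ((0, 1, 0) : ℝ × ℝ × ℝ) + a • ((0, 0, 1) : ℝ × ℝ × ℝ) := by
      simp [Prod.ext_iff]
    rw [hv, map_add, map_add, map_smul, map_smul]
    simp
  -- Part 1 : W = ∂²L/∂v²
  have hW_eq : ∀ t q v : ℝ,
      W t q v = fderiv ℝ (fderiv ℝ F) (t, q, v) (0, 0, 1) (0, 0, 1) := by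
    intro t q v
    have h0 := key t q v 0
    have h1 := key t q v 1
    rw [hsplit] at h0 h1
    nlinarith [h0, h1]
  have h_pvpvL : ∀ t q v : ℝ,
      pv (pv L) t q v = fderiv ℝ (fderiv ℝ F) (t, q, v) (0, 0, 1) (0, 0, 1) := by
    intro t q v
    have hrw : (fun s => pv L t q s) = fun s => fderiv ℝ F (t, q, s) (0, 0, 1) :=
      funext fun s => h_pvL t q s
    show deriv (fun s => pv L t q s) v = _
    rw [hrw]
    exact (lineV_ap (hF'd (t, q, v)) (0, 0, 1)).deriv
  refine ⟨fun t q v => (hW_eq t q v).trans (h_pvpvL t q v).symm, ?_⟩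
  -- Part 2
  intro t₀ q₀ v₀
  -- symmetry of second derivatives
  have hsymF : ∀ (x : ℝ × ℝ × ℝ) (u w : ℝ × ℝ × ℝ),
      fderiv ℝ (fderiv ℝ F) x u w = fderiv ℝ (fderiv ℝ F) x w u := fun x u w =>
    second_derivative_symmetric (fun y => (hFd y).hasFDerivAt) ((hF'd x).hasFDerivAt) u w
  have hsymF' : ∀ (x : ℝ × ℝ × ℝ) (u w : ℝ × ℝ × ℝ),
      fderiv ℝ (fderiv ℝ (fderiv ℝ F)) x u w = fderiv ℝ (fderiv ℝ (fderiv ℝ F)) x w u :=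
    fun x u w =>
    second_derivative_symmetric (fun y => (hF'd y).hasFDerivAt) ((hF''d x).hasFDerivAt) u w
  -- the identity as a function of v, and its derivative
  have hA : HasDerivAt (fun y => fderiv ℝ (fderiv ℝ F) (t₀, q₀, y) (1, 0, 0) (0, 0, 1))
      (fderiv ℝ (fderiv ℝ (fderiv ℝ F)) (t₀, q₀, v₀) (0, 0, 1) (1, 0, 0) (0, 0, 1)) v₀ :=
    lineV_ap2 (hF''d (t₀, q₀, v₀)) (1, 0, 0) (0, 0, 1)
  have hB0 : HasDerivAt (fun y => fderiv ℝ (fderiv ℝ F) (t₀, q₀, y) (0, 1, 0) (0, 0, 1))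
      (fderiv ℝ (fderiv ℝ (fderiv ℝ F)) (t₀, q₀, v₀) (0, 0, 1) (0, 1, 0) (0, 0, 1)) v₀ :=
    lineV_ap2 (hF''d (t₀, q₀, v₀)) (0, 1, 0) (0, 0, 1)
  have hB : HasDerivAt (fun y => y * fderiv ℝ (fderiv ℝ F) (t₀, q₀, y) (0, 1, 0) (0, 0, 1))
      (1 * fderiv ℝ (fderiv ℝ F) (t₀, q₀, v₀) (0, 1, 0) (0, 0, 1)
        + v₀ * fderiv ℝ (fderiv ℝ (fderiv ℝ F)) (t₀, q₀, v₀) (0, 0, 1) (0, 1, 0) (0, 0, 1)) v₀ :=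
    (hasDerivAt_id v₀).mul hB0
  have hC : HasDerivAt (fun y => fderiv ℝ F (t₀, q₀, y) (0, 1, 0))
      (fderiv ℝ (fderiv ℝ F) (t₀, q₀, v₀) (0, 0, 1) (0, 1, 0)) v₀ :=
    lineV_ap (hF'd (t₀, q₀, v₀)) (0, 1, 0)
  have hWv : HasDerivAt (fun y => W t₀ q₀ y)
      (fderiv ℝ (fun p : ℝ × ℝ × ℝ => W p.1 p.2.1 p.2.2) (t₀, q₀, v₀) (0, 0, 1)) v₀ :=
    lineV (hWd (t₀, q₀, v₀))
  have hfv : HasDerivAt (fun y => f t₀ q₀ y)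
      (fderiv ℝ (fun p : ℝ × ℝ × ℝ => f p.1 p.2.1 p.2.2) (t₀, q₀, v₀) (0, 0, 1)) v₀ :=
    lineV (hfd (t₀, q₀, v₀))
  have hD : HasDerivAt (fun y => W t₀ q₀ y * f t₀ q₀ y)
      (fderiv ℝ (fun p : ℝ × ℝ × ℝ => W p.1 p.2.1 p.2.2) (t₀, q₀, v₀) (0, 0, 1) * f t₀ q₀ v₀
        + W t₀ q₀ v₀ * fderiv ℝ (fun p : ℝ × ℝ × ℝ => f p.1 p.2.1 p.2.2) (t₀, q₀, v₀) (0, 0, 1))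
      v₀ := hWv.mul hfv
  have hΦ : (fun y => fderiv ℝ (fderiv ℝ F) (t₀, q₀, y) (1, 0, 0) (0, 0, 1)
        + y * fderiv ℝ (fderiv ℝ F) (t₀, q₀, y) (0, 1, 0) (0, 0, 1)
        - fderiv ℝ F (t₀, q₀, y) (0, 1, 0)
        + W t₀ q₀ y * f t₀ q₀ y) = fun _ => (0 : ℝ) := by
    funext y
    have h0 := key t₀ q₀ y 0
    rw [hsplit] at h0
    nlinarith [h0]
  have hΦ' : HasDerivAt (fun y => fderiv ℝ (fderiv ℝ F) (t₀, q₀, y) (1, 0, 0) (0, 0, 1)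
        + y * fderiv ℝ (fderiv ℝ F) (t₀, q₀, y) (0, 1, 0) (0, 0, 1)
        - fderiv ℝ F (t₀, q₀, y) (0, 1, 0)
        + W t₀ q₀ y * f t₀ q₀ y) _ v₀ := ((hA.add hB).sub hC).add hD
  rw [hΦ] at hΦ'
  have hzero := hΦ'.unique (hasDerivAt_const v₀ 0)
  -- identify pt W, pq W, pv W
  have hptW : pt W t₀ q₀ v₀
      = fderiv ℝ (fderiv ℝ (fderiv ℝ F)) (t₀, q₀, v₀) (1, 0, 0) (0, 0, 1) (0, 0, 1) := by
    have hrw : (fun s => W s q₀ v₀)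
        = fun s => fderiv ℝ (fderiv ℝ F) (s, q₀, v₀) (0, 0, 1) (0, 0, 1) :=
      funext fun s => hW_eq s q₀ v₀
    show deriv (fun s => W s q₀ v₀) t₀ = _
    rw [hrw]
    exact (lineT_ap2 (hF''d (t₀, q₀, v₀)) (0, 0, 1) (0, 0, 1)).deriv
  have hpqW : pq W t₀ q₀ v₀
      = fderiv ℝ (fderiv ℝ (fderiv ℝ F)) (t₀, q₀, v₀) (0, 1, 0) (0, 0, 1) (0, 0, 1) := by
    have hrw : (fun s => W t₀ s v₀)
        = fun s => fderiv ℝ (fderiv ℝ F) (t₀, s, v₀) (0, 0, 1) (0, 0, 1) :=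
      funext fun s => hW_eq t₀ s v₀
    show deriv (fun s => W t₀ s v₀) q₀ = _
    rw [hrw]
    exact (lineQ_ap2 (hF''d (t₀, q₀, v₀)) (0, 0, 1) (0, 0, 1)).deriv
  have hpvW : pv W t₀ q₀ v₀
      = fderiv ℝ (fun p : ℝ × ℝ × ℝ => W p.1 p.2.1 p.2.2) (t₀, q₀, v₀) (0, 0, 1) := hWv.deriv
  have hpvf : pv f t₀ q₀ v₀
      = fderiv ℝ (fun p : ℝ × ℝ × ℝ => f p.1 p.2.1 p.2.2) (t₀, q₀, v₀) (0, 0, 1) := hfv.deriv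
  -- symmetry rewrites
  have e1 : fderiv ℝ (fderiv ℝ (fderiv ℝ F)) (t₀, q₀, v₀) (0, 0, 1) (1, 0, 0) (0, 0, 1)
      = fderiv ℝ (fderiv ℝ (fderiv ℝ F)) (t₀, q₀, v₀) (1, 0, 0) (0, 0, 1) (0, 0, 1) := by
    rw [hsymF' (t₀, q₀, v₀) (0, 0, 1) (1, 0, 0)]
  have e2 : fderiv ℝ (fderiv ℝ (fderiv ℝ F)) (t₀, q₀, v₀) (0, 0, 1) (0, 1, 0) (0, 0, 1)
      = fderiv ℝ (fderiv ℝ (fderiv ℝ F)) (t₀, q₀, v₀) (0, 1, 0) (0, 0, 1) (0, 0, 1) := by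
    rw [hsymF' (t₀, q₀, v₀) (0, 0, 1) (0, 1, 0)]
  have e3 : fderiv ℝ (fderiv ℝ F) (t₀, q₀, v₀) (0, 1, 0) (0, 0, 1)
      = fderiv ℝ (fderiv ℝ F) (t₀, q₀, v₀) (0, 0, 1) (0, 1, 0) :=
    hsymF (t₀, q₀, v₀) (0, 1, 0) (0, 0, 1)
  rw [hptW, hpqW, hpvW, hpvf]
  rw [e1, e2, e3] at hzero
  linarith [hzero]
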